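/- Let φ: R' → R be a component-wise isomorphic epimorphism of graded rings, M ⊆ R^+ a multiplicative submonoid of nonzero homogeneous elements and M' := φ^{-1}(M) ∩ R'^+. Then the induced map M'^{-1}R' → M^{-1}R on localizations is again a component-wise isomorphic epimorphism. In particular, for f' ∈ R'^+ the induced map R'_{f'} → R_{φ(f')} is a CIE. -/

import Mathlib

section

variable {K R : Type*} [AddCommGroup K] [DecidableEq K] [CommRing R]

def homSubmonoid (𝒜 : K → AddSubgroup R) [GradedRing 𝒜] : Submonoid R where
  carrier := {r : R | SetLike.IsHomogeneousElem 𝒜 r}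
  one_mem' := SetLike.isHomogeneousElem_one 𝒜
  mul_mem' := fun ha hb => SetLike.IsHomogeneousElem.mul ha hb

/-- The degree `w` component of the localization of a graded ring at a submonoid `M` of
homogeneous elements: fractions `r / m` with `r` of degree `u`, `m` of degree `v`
and `u = w + v`. -/
def locComponent (𝒜 : K → AddSubgroup R) [GradedRing 𝒜] (M : Submonoid R) (w : K) :
    Set (Localization M) :=
  {x | ∃ (r m : R) (hm : m ∈ M) (u v : K),
    r ∈ 𝒜 u ∧ m ∈ 𝒜 v ∧ u = w + v ∧ x = Localization.mk r ⟨m, hm⟩}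

end

/-! A fraction `r / m` of `M⁻¹R` has a homogeneous denominator `m ∈ M`; lifting `m` along the
component of a preimage degree gives a homogeneous `m' ∈ M'`, and lifting `r` gives a preimage
fraction, of the right degree when `r` is homogeneous. Two fractions of degree `w'` with equal
images satisfy `c * (m₂ * r₁) = c * (m₁ * r₂)` in `R` for some `c ∈ M`; after lifting `c` to a
homogeneous `c'`, both sides of the corresponding equation in `R'` lie in one component, where
`φ` is injective. -/

theorem Localization.map_mk {A B : Type*} [CommRing A] [CommRing B] {N : Submonoid A}
    {M : Submonoid B} (f : A →+* B) (h : N ≤ M.comap f) (r : A) (m : N) :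
    IsLocalization.map (Localization M) f h (Localization.mk r m)
      = Localization.mk (f r) ⟨f m, h m.2⟩ := by
  rw [Localization.mk_eq_mk'_apply, IsLocalization.map_mk', Localization.mk_eq_mk'_apply]

section

variable {K R K' R' : Type*} [AddCommGroup K] [CommRing R] [AddCommGroup K'] [CommRing R']

theorem mk_mem_locComponent [DecidableEq K] (𝒜 : K → AddSubgroup R) [GradedRing 𝒜]
    {M : Submonoid R} {w v : K} {r m : R} (hr : r ∈ 𝒜 (w + v)) (hmv : m ∈ 𝒜 v) (hm : m ∈ M) :
    Localization.mk r ⟨m, hm⟩ ∈ locComponent 𝒜 M w :=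
  ⟨r, m, hm, w + v, v, hr, hmv, rfl, rfl⟩

/-- `φ : R' → R` is a CIE over `ψ : K' → K`. -/
structure IsComponentwiseIsoEpi (𝒜' : K' → AddSubgroup R') (𝒜 : K → AddSubgroup R)
    (φ : R' →+* R) (ψ : K' →+ K) : Prop where
  surjective : Function.Surjective φ
  degree_surjective : Function.Surjective ψ
  map_mem : ∀ {w' : K'} {r : R'}, r ∈ 𝒜' w' → φ r ∈ 𝒜 (ψ w')
  injOn : ∀ {w' : K'} {r s : R'}, r ∈ 𝒜' w' → s ∈ 𝒜' w' → φ r = φ s → r = s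
  exists_preimage : ∀ {w' : K'} {y : R}, y ∈ 𝒜 (ψ w') → ∃ r ∈ 𝒜' w', φ r = y

variable [DecidableEq K'] (𝒜' : K' → AddSubgroup R') [GradedRing 𝒜']

/-- The submonoid `M' = φ⁻¹(M) ∩ R'⁺`. -/
def liftSubmonoid (φ : R' →+* R) (M : Submonoid R) : Submonoid R' :=
  M.comap φ ⊓ homSubmonoid 𝒜'

noncomputable def localizationMap (φ : R' →+* R) (M : Submonoid R) :
    Localization (liftSubmonoid 𝒜' φ M) →+* Localization M :=
  IsLocalization.map (M := liftSubmonoid 𝒜' φ M) (T := M) (Localization M) φ inf_le_left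

variable {𝒜'}

theorem localizationMap_mk {φ : R' →+* R} {M : Submonoid R} (r : R')
    (m : liftSubmonoid 𝒜' φ M) :
    localizationMap 𝒜' φ M (Localization.mk r m) = Localization.mk (φ r) ⟨φ m, m.2.1⟩ :=
  Localization.map_mk φ _ r m

namespace IsComponentwiseIsoEpi

variable {𝒜 : K → AddSubgroup R} {φ : R' →+* R} {ψ : K' →+ K} {M : Submonoid R}

theorem exists_lift_of_mem_degree (hφ : IsComponentwiseIsoEpi 𝒜' 𝒜 φ ψ) {v' : K'} {m : R}
    (hm : m ∈ M) (hmv : m ∈ 𝒜 (ψ v')) :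
    ∃ m', m' ∈ 𝒜' v' ∧ m' ∈ liftSubmonoid 𝒜' φ M ∧ φ m' = m := by
  obtain ⟨m', hm'v, rfl⟩ := hφ.exists_preimage hmv
  exact ⟨m', hm'v, ⟨hm, v', hm'v⟩, rfl⟩

variable [DecidableEq K] [GradedRing 𝒜]

theorem exists_lift_of_mem (hφ : IsComponentwiseIsoEpi 𝒜' 𝒜 φ ψ) (hM : M ≤ homSubmonoid 𝒜)
    {m : R} (hm : m ∈ M) :
    ∃ v' m', m' ∈ 𝒜' v' ∧ m' ∈ liftSubmonoid 𝒜' φ M ∧ φ m' = m := by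
  obtain ⟨v, hmv⟩ := hM hm
  obtain ⟨v', rfl⟩ := hφ.degree_surjective v
  exact ⟨v', hφ.exists_lift_of_mem_degree hm hmv⟩

theorem localizationMap_surjective (hφ : IsComponentwiseIsoEpi 𝒜' 𝒜 φ ψ)
    (hM : M ≤ homSubmonoid 𝒜) : Function.Surjective (localizationMap 𝒜' φ M) := by
  intro x
  induction x using Localization.induction_on with
  | H p =>
  obtain ⟨r, m, hm⟩ := p
  obtain ⟨-, m', -, hm'M, rfl⟩ := hφ.exists_lift_of_mem hM hm
  obtain ⟨r', rfl⟩ := hφ.surjective r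
  exact ⟨Localization.mk r' ⟨m', hm'M⟩, localizationMap_mk r' _⟩

theorem mapsTo_locComponent (hφ : IsComponentwiseIsoEpi 𝒜' 𝒜 φ ψ) (w' : K') :
    Set.MapsTo (localizationMap 𝒜' φ M)
      (locComponent 𝒜' (liftSubmonoid 𝒜' φ M) w') (locComponent 𝒜 M (ψ w')) := by
  rintro x ⟨r, m, hm, u, v, hr, hmv, rfl, rfl⟩
  rw [localizationMap_mk]
  exact mk_mem_locComponent 𝒜 (map_add ψ w' v ▸ hφ.map_mem hr) (hφ.map_mem hmv) hm.1

theorem injOn_locComponent (hφ : IsComponentwiseIsoEpi 𝒜' 𝒜 φ ψ) (hM : M ≤ homSubmonoid 𝒜)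
    (w' : K') :
    Set.InjOn (localizationMap 𝒜' φ M) (locComponent 𝒜' (liftSubmonoid 𝒜' φ M) w') := by
  rintro x ⟨r₁, m₁, hm₁, u₁, v₁, hr₁, hmv₁, rfl, rfl⟩
    y ⟨r₂, m₂, hm₂, u₂, v₂, hr₂, hmv₂, rfl, rfl⟩ hxy
  rw [localizationMap_mk, localizationMap_mk, Localization.mk_eq_mk_iff,
    Localization.r_iff_exists] at hxy
  obtain ⟨⟨c, hc⟩, hceq⟩ := hxy
  obtain ⟨t', c', hc't, hc'M, rfl⟩ := hφ.exists_lift_of_mem hM hc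
  rw [Localization.mk_eq_mk_iff, Localization.r_iff_exists]
  refine ⟨⟨c', hc'M⟩, hφ.injOn (w' := t' + (v₂ + (w' + v₁))) ?_ ?_ (by simpa using hceq)⟩
  · exact SetLike.mul_mem_graded hc't (SetLike.mul_mem_graded hmv₂ hr₁)
  · have hdeg : t' + (v₁ + (w' + v₂)) = t' + (v₂ + (w' + v₁)) := by abel
    exact hdeg ▸ SetLike.mul_mem_graded hc't (SetLike.mul_mem_graded hmv₁ hr₂)

theorem surjOn_locComponent (hφ : IsComponentwiseIsoEpi 𝒜' 𝒜 φ ψ) (w' : K') :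
    Set.SurjOn (localizationMap 𝒜' φ M)
      (locComponent 𝒜' (liftSubmonoid 𝒜' φ M) w') (locComponent 𝒜 M (ψ w')) := by
  rintro x ⟨r, m, hm, u, v, hr, hmv, rfl, rfl⟩
  obtain ⟨v', rfl⟩ := hφ.degree_surjective v
  obtain ⟨m', hm'v, hm'M, rfl⟩ := hφ.exists_lift_of_mem_degree hm hmv
  obtain ⟨r', hr'u, rfl⟩ := hφ.exists_preimage (w' := w' + v') (by rwa [map_add])
  exact ⟨_, mk_mem_locComponent 𝒜' hr'u hm'v hm'M, localizationMap_mk r' _⟩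

end IsComponentwiseIsoEpi

end

section

variable {K R : Type*} [AddCommGroup K] [DecidableEq K] [CommRing R]

theorem stmt_8 {K' R' : Type*} [AddCommGroup K'] [DecidableEq K'] [CommRing R']
    (𝒜' : K' → AddSubgroup R') [GradedRing 𝒜'] (𝒜 : K → AddSubgroup R) [GradedRing 𝒜]
    (φ : R' →+* R) (ψ : K' →+ K) (hψ : Function.Surjective ψ)
    (hφ : Function.Surjective φ)
    (hmap : ∀ (w' : K') (r : R'), r ∈ 𝒜' w' → φ r ∈ 𝒜 (ψ w'))
    (hinj : ∀ (w' : K') (r s : R'), r ∈ 𝒜' w' → s ∈ 𝒜' w' → φ r = φ s → r = s)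
    (hsur : ∀ (w' : K') (y : R), y ∈ 𝒜 (ψ w') → ∃ r ∈ 𝒜' w', φ r = y)
    (M : Submonoid R) (hM : (M : Set R) ⊆ {r : R | SetLike.IsHomogeneousElem 𝒜 r ∧ r ≠ 0}) :
    letI M' : Submonoid R' := Submonoid.comap φ M ⊓ homSubmonoid 𝒜'
    letI Φ : Localization M' → Localization M :=
      IsLocalization.map (Localization M) φ
        (le_trans inf_le_left (le_of_eq rfl) : M' ≤ Submonoid.comap φ M)
    Function.Surjective Φ ∧
      ∀ w' : K', Set.BijOn Φ (locComponent 𝒜' M' w') (locComponent 𝒜 M (ψ w')) := by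
  have hCIE : IsComponentwiseIsoEpi 𝒜' 𝒜 φ ψ :=
    ⟨hφ, hψ, hmap _ _, hinj _ _ _, hsur _ _⟩
  have hMhom : M ≤ homSubmonoid 𝒜 := fun m hm => (hM hm).1
  show Function.Surjective (localizationMap 𝒜' φ M) ∧ ∀ w' : K',
    Set.BijOn (localizationMap 𝒜' φ M) (locComponent 𝒜' (liftSubmonoid 𝒜' φ M) w')
      (locComponent 𝒜 M (ψ w'))
  exact ⟨hCIE.localizationMap_surjective hMhom, fun w' =>
    ⟨hCIE.mapsTo_locComponent w', hCIE.injOn_locComponent hMhom w',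
      hCIE.surjOn_locComponent w'⟩⟩

end
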